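/- arXiv:1604.05251 — 3 statements merged into one kernel-verified Lean document; each statement's English description precedes it below -/
import Mathlib

section
/- Let X be a set, k a kernel on X with RKHS H_k, F a locally convex topological vector space over ℂ of functions on X containing H_k, and assume the inclusion ι : H_k → F is continuous. Define the kernel mean embedding Φ_k : F′ → H_k by letting Φ_k(D) be the unique element of H_k with ⟨f, Φ_k(D)⟩ = conj(D(f)) for all f ∈ H_k (the Riesz representer of the conjugate of D ∘ ι). Then: (a) Φ_k is continuous when F′ carries the strong dual topology (uniform convergence on bounded subsets of F) and H_k its norm topology; (b) Φ_k is continuous when F′ carries the weak-* topology (pointwise convergence on F) and H_k its weak topology (the topology in which a net converges iff its inner products against every fixed element of H_k converge). -/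
/-!
By the Riesz representation theorem, `Φ D = (toDual ℂ H).symm (D ∘ ι)`: the transpose
`D ↦ D ∘ ι` is continuous for the strong dual topologies and the Riesz map is an isometry,
which gives (a). For (b), `⟪h, Φ D⟫ = conj (D (ι h))` is evaluation at `ι h` followed by
conjugation, a weak-* continuous function of `D`.
-/

open MeasureTheory ComplexConjugate Filter Topology

noncomputable section

/-- A (positive definite) kernel: all quadratic forms are nonnegative real numbers. -/
def IsPosDefKernel {X : Type*} (k : X → X → ℂ) : Prop :=
  ∀ (n : ℕ) (x : Fin n → X) (c : Fin n → ℂ),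
    0 ≤ (∑ i, ∑ j, c i * conj (c j) * k (x i) (x j)).re ∧
    (∑ i, ∑ j, c i * conj (c j) * k (x i) (x j)).im = 0

open InnerProductSpace

section RieszRepresenter

variable {𝕜 E F : Type*} [RCLike 𝕜] [NormedAddCommGroup E] [InnerProductSpace 𝕜 E]
  [AddCommGroup F] [Module 𝕜 F] [TopologicalSpace F]
  {ι : E →L[𝕜] F} {Φ : (F →L[𝕜] 𝕜) → E}

theorem eq_toDual_symm_comp_of_inner_eq [CompleteSpace E]
    (hΦ : ∀ (D : F →L[𝕜] 𝕜) (f : E), ⟪Φ D, f⟫_𝕜 = D (ι f)) :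
    Φ = fun D => (toDual 𝕜 E).symm (D.comp ι) := by
  funext D
  rw [LinearIsometryEquiv.eq_symm_apply]
  ext f
  simp [hΦ]

theorem continuous_of_inner_eq [CompleteSpace E]
    (hΦ : ∀ (D : F →L[𝕜] 𝕜) (f : E), ⟪Φ D, f⟫_𝕜 = D (ι f)) : Continuous Φ := by
  rw [eq_toDual_symm_comp_of_inner_eq hΦ]
  exact (toDual 𝕜 E).symm.continuous.comp (ContinuousLinearMap.precomp 𝕜 ι).continuous

theorem continuous_weak_of_inner_eq
    (hΦ : ∀ (D : F →L[𝕜] 𝕜) (f : E), ⟪Φ D, f⟫_𝕜 = D (ι f)) :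
    @Continuous (F →L[𝕜] 𝕜) E
      (TopologicalSpace.induced (fun D : F →L[𝕜] 𝕜 => fun f : F => D f) inferInstance)
      (TopologicalSpace.induced (fun g : E => fun h : E => ⟪h, g⟫_𝕜) inferInstance)
      Φ := by
  let _ : TopologicalSpace (F →L[𝕜] 𝕜) :=
    TopologicalSpace.induced (fun D : F →L[𝕜] 𝕜 => fun f : F => D f) inferInstance
  refine continuous_induced_rng.2 (continuous_pi fun h => ?_)
  have hconj : (fun D => ⟪h, Φ D⟫_𝕜) = fun D : F →L[𝕜] 𝕜 => conj (D (ι h)) := by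
    funext D
    rw [← inner_conj_symm, hΦ]
  show Continuous fun D => ⟪h, Φ D⟫_𝕜
  rw [hconj]
  exact RCLike.continuous_conj.comp ((continuous_apply (ι h)).comp continuous_induced_dom)

end RieszRepresenter

theorem statement_15_general
    (H : Type*) [NormedAddCommGroup H] [InnerProductSpace ℂ H] [CompleteSpace H]
    -- `F`: a locally convex TVS of functions on `X`
    (F : Type*) [AddCommGroup F] [Module ℂ F] [TopologicalSpace F]
    -- the (continuous) inclusion of `H_k` into `F`
    (ι : H →L[ℂ] F)
    -- the kernel mean embedding: the Riesz representer of `D ∘ ι`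
    (Φ : (F →L[ℂ] ℂ) → H)
    (hΦ : ∀ (D : F →L[ℂ] ℂ) (f : H), (inner ℂ (Φ D) f : ℂ) = D (ι f)) :
    -- (a) strong-to-strong continuity (the topology on `F →L[ℂ] ℂ` is the strong dual one)
    Continuous Φ ∧
    -- (b) weak-*-to-weak continuity
    @Continuous (F →L[ℂ] ℂ) H
      (TopologicalSpace.induced (fun D : F →L[ℂ] ℂ => fun f : F => D f) inferInstance)
      (TopologicalSpace.induced (fun g : H => fun h : H => (inner ℂ h g : ℂ)) inferInstance)
      Φ :=
  ⟨continuous_of_inner_eq hΦ, continuous_weak_of_inner_eq hΦ⟩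

/-- if `H_k` embeds continuously into a locally convex TVS `F` of functions
on `X`, then the kernel mean embedding `Φ_k : F′ → H_k` (the Riesz representer of
`D ∘ ι`, i.e. of the conjugate of `D ∘ ι` up to the conjugation bookkeeping) is
(a) continuous from the strong dual topology to the norm topology, and
(b) continuous from the weak-* topology to the weak topology of `H_k`. -/
theorem statement_15
    {X : Type*} (k : X → X → ℂ) (hk : IsPosDefKernel k)
    (H : Type*) [NormedAddCommGroup H] [InnerProductSpace ℂ H] [CompleteSpace H]
    (ev : H →ₗ[ℂ] (X → ℂ)) (hev : Function.Injective ev)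
    (K : X → H) (hK : ∀ x, ev (K x) = fun s => k s x)
    (hrep : ∀ (f : H) (x : X), (inner ℂ (K x) f : ℂ) = ev f x)
    -- `F`: a locally convex TVS of functions on `X`
    (F : Type*) [AddCommGroup F] [Module ℂ F] [TopologicalSpace F]
    [IsTopologicalAddGroup F] [ContinuousSMul ℂ F]
    [Module ℝ F] [IsScalarTower ℝ ℂ F] [LocallyConvexSpace ℝ F]
    (j : F →ₗ[ℂ] (X → ℂ)) (hj : Function.Injective j)
    -- the (continuous) inclusion of `H_k` into `F`
    (ι : H →L[ℂ] F) (hι : ∀ f : H, j (ι f) = ev f)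
    -- the kernel mean embedding: the Riesz representer of `D ∘ ι`
    (Φ : (F →L[ℂ] ℂ) → H)
    (hΦ : ∀ (D : F →L[ℂ] ℂ) (f : H), (inner ℂ (Φ D) f : ℂ) = D (ι f)) :
    -- (a) strong-to-strong continuity (the topology on `F →L[ℂ] ℂ` is the strong dual one)
    Continuous Φ ∧
    -- (b) weak-*-to-weak continuity
    @Continuous (F →L[ℂ] ℂ) H
      (TopologicalSpace.induced (fun D : F →L[ℂ] ℂ => fun f : F => D f) inferInstance)
      (TopologicalSpace.induced (fun g : H => fun h : H => (inner ℂ h g : ℂ)) inferInstance)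
      Φ :=
  statement_15_general H F ι Φ hΦ

end
end

section
/- Let F be a barrelled locally convex topological vector space over ℂ, k a kernel on a set X with RKHS H_k ⊆ F, and assume the inclusion ι : H_k → F is continuous with dense range (k is universal over F). Let B ⊆ F′ be a bounded subset of the dual, i.e., sup_{D∈B} |D(f)| < ∞ for every f ∈ F. Then on B the weak-* topology (pointwise convergence on F) coincides with the topology of pointwise convergence on H_k: for any net (D_α) in B and any D ∈ B, D_α(f) → D(f) for all f ∈ F if and only if D_α(g) → D(g) for all g ∈ H_k. Consequently, letting Φ_k(D) ∈ H_k denote the Riesz representer of the conjugate of D ∘ ι, the pseudometric d_k(D,T) := ‖Φ_k(D) − Φ_k(T)‖ induces on B a topology finer than the weak-* topology restricted to B and coarser than the strong dual topology restricted to B. -/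
open MeasureTheory ComplexConjugate Filter Topology

noncomputable section

/-!
Over a barrelled space, Banach–Steinhaus makes the pointwise bounded set `B ⊆ F′`
equicontinuous, and on an equicontinuous family pointwise convergence on the dense subspace
`ι(H_k)` already forces pointwise convergence on all of `F`. Since `D (ι g) = ⟪Φ D, g⟫`,
convergence of `Φ D` in norm gives pointwise convergence on `H_k`; and `Φ` is continuous for
the strong topology because, composed with the isometry `H → H′`, it is precomposition with `ι`.
-/

theorem BarrelledSpace.equicontinuous_of_forall_norm_le
    {𝕜 E G ι : Type*} [NontriviallyNormedField 𝕜]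
    [AddCommGroup E] [Module 𝕜 E] [TopologicalSpace E] [IsTopologicalAddGroup E]
    [ContinuousSMul 𝕜 E] [BarrelledSpace 𝕜 E] [NormedAddCommGroup G] [NormedSpace 𝕜 G]
    (𝓕 : ι → E →L[𝕜] G) (h𝓕 : ∀ x, ∃ C, ∀ i, ‖𝓕 i x‖ ≤ C) :
    Equicontinuous fun i ↦ ⇑(𝓕 i) := by
  let : UniformSpace E := IsTopologicalAddGroup.rightUniformSpace E
  have : IsUniformAddGroup E := isUniformAddGroup_of_addCommGroup
  refine ((norm_withSeminorms 𝕜 G).banach_steinhaus fun _ x ↦ ?_).equicontinuous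
  obtain ⟨C, hC⟩ := h𝓕 x
  exact ⟨C, by rintro _ ⟨i, rfl⟩; exact hC i⟩

theorem Equicontinuous.induced_comp_denseRange_eq {ι X Y α : Type*} [TopologicalSpace X]
    [UniformSpace α] {F : ι → X → α} (hF : Equicontinuous F) {e : Y → X} (he : DenseRange e) :
    TopologicalSpace.induced (fun i y ↦ F i (e y)) inferInstance =
      TopologicalSpace.induced F inferInstance := by
  refine le_antisymm ?_ ?_
  · let _ : TopologicalSpace ι := TopologicalSpace.induced (fun i y ↦ F i (e y)) inferInstance
    refine continuous_iff_le_induced.mp (continuous_pi fun x ↦ ?_)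
    refine continuous_iff_continuousAt.mpr fun i₀ ↦ ?_
    refine (hF x).tendsto_of_mem_closure (hF.continuous i₀).continuousWithinAt ?_ (he x)
    rintro _ ⟨y, rfl⟩
    exact ((continuous_apply y).comp continuous_induced_dom).tendsto i₀
  · rw [show (fun i y ↦ F i (e y)) = (fun f y ↦ f (e y)) ∘ F from rfl, ← induced_compose]
    exact induced_mono (continuous_pi fun y ↦ continuous_apply (e y)).le_induced

theorem continuous_of_inner_eq_apply
    {𝕜 H F : Type*} [RCLike 𝕜] [NormedAddCommGroup H] [InnerProductSpace 𝕜 H]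
    [AddCommGroup F] [Module 𝕜 F] [TopologicalSpace F] [IsTopologicalAddGroup F]
    (ι : H →L[𝕜] F) (Φ : (F →L[𝕜] 𝕜) → H) (hΦ : ∀ D f, inner 𝕜 (Φ D) f = D (ι f)) :
    Continuous Φ := by
  have hcomp : ⇑(InnerProductSpace.toDualMap 𝕜 H) ∘ Φ = ContinuousLinearMap.precomp 𝕜 ι :=
    funext fun D ↦ ContinuousLinearMap.ext (hΦ D)
  exact (InnerProductSpace.toDualMap 𝕜 H).isometry.comp_continuous_iff.mp
    (hcomp ▸ (ContinuousLinearMap.precomp 𝕜 ι).continuous)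

theorem statement_17_general
    (H : Type*) [NormedAddCommGroup H] [InnerProductSpace ℂ H]
    -- `F`: a barrelled locally convex TVS containing `H_k`
    (F : Type*) [AddCommGroup F] [Module ℂ F] [TopologicalSpace F]
    [IsTopologicalAddGroup F] [ContinuousSMul ℂ F]
    [BarrelledSpace ℂ F]
    (ι : H →L[ℂ] F)
    -- `k` is universal over `F`
    (hdense : DenseRange ι)
    -- `B`: a (pointwise) bounded subset of the dual `F′`
    (B : Set (F →L[ℂ] ℂ))
    (hB : ∀ f : F, ∃ C : ℝ, ∀ D ∈ B, ‖D f‖ ≤ C)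
    -- the kernel mean embedding (Riesz representer of `D ∘ ι`)
    (Φ : (F →L[ℂ] ℂ) → H)
    (hΦ : ∀ (D : F →L[ℂ] ℂ) (f : H), (inner ℂ (Φ D) f : ℂ) = D (ι f)) :
    -- on `B`, the weak-* topology coincides with pointwise convergence on `H_k`
    (TopologicalSpace.induced (fun D : B => fun f : F => (D : F →L[ℂ] ℂ) f)
        (inferInstance : TopologicalSpace (F → ℂ))
      = TopologicalSpace.induced (fun D : B => fun g : H => (D : F →L[ℂ] ℂ) (ι g))
        (inferInstance : TopologicalSpace (H → ℂ))) ∧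
    -- the `d_k`-topology on `B` is finer than the weak-* topology …
    (TopologicalSpace.induced (fun D : B => Φ D) (inferInstance : TopologicalSpace H)
      ≤ TopologicalSpace.induced (fun D : B => fun f : F => (D : F →L[ℂ] ℂ) f)
        (inferInstance : TopologicalSpace (F → ℂ))) ∧
    -- … and coarser than the strong dual topology
    (TopologicalSpace.induced (fun D : B => (D : F →L[ℂ] ℂ))
        (inferInstance : TopologicalSpace (F →L[ℂ] ℂ))
      ≤ TopologicalSpace.induced (fun D : B => Φ D) (inferInstance : TopologicalSpace H)) := by
  have hequi : Equicontinuous fun D : B ↦ ⇑(D : F →L[ℂ] ℂ) :=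
    BarrelledSpace.equicontinuous_of_forall_norm_le _ fun f ↦
      (hB f).imp fun _ hC D ↦ hC D D.2
  have hweak := (hequi.induced_comp_denseRange_eq hdense).symm
  refine ⟨hweak, ?_, ?_⟩
  · rw [hweak, show (fun (D : B) (g : H) ↦ (D : F →L[ℂ] ℂ) (ι g)) =
      (fun h g ↦ inner ℂ h g) ∘ fun D : B ↦ Φ D from funext₂ fun D g ↦ (hΦ D g).symm,
      ← induced_compose]
    exact induced_mono (continuous_pi fun g ↦ continuous_id.inner continuous_const).le_induced
  · rw [show (fun D : B ↦ Φ D) = Φ ∘ fun D : B ↦ (D : F →L[ℂ] ℂ) from rfl, ← induced_compose]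
    exact induced_mono (continuous_of_inner_eq_apply ι Φ hΦ).le_induced

/-- if `F` is barrelled, `H_k ↪ F` continuously and densely (`k` universal
over `F`), and `B ⊆ F′` is pointwise bounded, then on `B` the weak-* topology coincides with
the topology of pointwise convergence on `H_k`; consequently the pseudometric
`d_k(D,T) = ‖Φ_k D − Φ_k T‖` induces on `B` a topology finer than the weak-* topology and
coarser than the strong dual topology. -/
theorem statement_17
    {X : Type*} (k : X → X → ℂ) (hk : IsPosDefKernel k)
    (H : Type*) [NormedAddCommGroup H] [InnerProductSpace ℂ H] [CompleteSpace H]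
    (ev : H →ₗ[ℂ] (X → ℂ)) (hev : Function.Injective ev)
    (K : X → H) (hK : ∀ x, ev (K x) = fun s => k s x)
    (hrep : ∀ (f : H) (x : X), (inner ℂ (K x) f : ℂ) = ev f x)
    -- `F`: a barrelled locally convex TVS containing `H_k`
    (F : Type*) [AddCommGroup F] [Module ℂ F] [TopologicalSpace F]
    [IsTopologicalAddGroup F] [ContinuousSMul ℂ F]
    [Module ℝ F] [IsScalarTower ℝ ℂ F] [LocallyConvexSpace ℝ F]
    [BarrelledSpace ℂ F]
    (j : F →ₗ[ℂ] (X → ℂ)) (hj : Function.Injective j)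
    (ι : H →L[ℂ] F) (hι : ∀ f : H, j (ι f) = ev f)
    -- `k` is universal over `F`
    (hdense : DenseRange ι)
    -- `B`: a (pointwise) bounded subset of the dual `F′`
    (B : Set (F →L[ℂ] ℂ))
    (hB : ∀ f : F, ∃ C : ℝ, ∀ D ∈ B, ‖D f‖ ≤ C)
    -- the kernel mean embedding (Riesz representer of `D ∘ ι`)
    (Φ : (F →L[ℂ] ℂ) → H)
    (hΦ : ∀ (D : F →L[ℂ] ℂ) (f : H), (inner ℂ (Φ D) f : ℂ) = D (ι f)) :
    -- on `B`, the weak-* topology coincides with pointwise convergence on `H_k`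
    (TopologicalSpace.induced (fun D : B => fun f : F => (D : F →L[ℂ] ℂ) f)
        (inferInstance : TopologicalSpace (F → ℂ))
      = TopologicalSpace.induced (fun D : B => fun g : H => (D : F →L[ℂ] ℂ) (ι g))
        (inferInstance : TopologicalSpace (H → ℂ))) ∧
    -- the `d_k`-topology on `B` is finer than the weak-* topology …
    (TopologicalSpace.induced (fun D : B => Φ D) (inferInstance : TopologicalSpace H)
      ≤ TopologicalSpace.induced (fun D : B => fun f : F => (D : F →L[ℂ] ℂ) f)
        (inferInstance : TopologicalSpace (F → ℂ))) ∧
    -- … and coarser than the strong dual topology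
    (TopologicalSpace.induced (fun D : B => (D : F →L[ℂ] ℂ))
        (inferInstance : TopologicalSpace (F →L[ℂ] ℂ))
      ≤ TopologicalSpace.induced (fun D : B => Φ D) (inferInstance : TopologicalSpace H)) :=
  statement_17_general H F ι hdense B hB Φ hΦ

end
end

section
/- Let d ≥ 1 and let ψ : ℝ^d → ℂ be a continuous function vanishing at infinity (for every ε > 0 there is a compact K ⊆ ℝ^d with |ψ| ≤ ε outside K) such that k(x,y) := ψ(x − y) is a kernel on ℝ^d with RKHS H_k. For n ≥ 1 let P_n be the uniform probability measure on the cube [0,n]^d, i.e., Lebesgue measure restricted to [0,n]^d divided by n^d. Then ∬ k(x,y) dP_n(y) dP_n(x) → 0 as n → ∞, equivalently ‖Φ_k(P_n)‖ → 0, while P_n does not converge narrowly to the zero measure (indeed P_n(ℝ^d) = 1 for all n). Consequently, k does not metrise the narrow topology on any set M of finite positive Borel measures on ℝ^d containing all Borel probability measures together with the zero measure: the topology induced on M by the pseudometric d_k(μ,ν) := ‖Φ_k(μ) − Φ_k(ν)‖ differs from the narrow topology on M. -/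
open MeasureTheory ComplexConjugate Filter Topology

noncomputable section

/-- The narrow (weak convergence) topology on a set `M` of measures: the coarsest topology
making `μ ↦ ∫ f dμ` continuous for every bounded continuous `f`. -/
noncomputable def narrowTopology (X : Type*) [TopologicalSpace X] [MeasurableSpace X]
    (M : Set (Measure X)) : TopologicalSpace M :=
  TopologicalSpace.induced
    (fun μ : M => fun f : BoundedContinuousFunction X ℝ => ∫ x, f x ∂(μ : Measure X))
    inferInstance

/-!
The uniform measures `P_n` spread out: every ball of fixed radius `R` has `P_n`-mass at most
`(2R)^d / n^d`. Splitting `∫ ψ(x - y) dP_n(y)` into the ball `‖x - y‖ ≤ R`, where `|ψ| ≤ ‖ψ‖_∞`,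
and its complement, where `|ψ|` is small, shows that `∬ k dP_n dP_n → 0`. Since this double
integral equals `‖Φ_k(P_n)‖²`, the embeddings `Φ_k(P_n)` converge to `Φ_k(0) = 0`, whereas the
probability measures `P_n` cannot converge narrowly to `0` (test against the constant `1`).
-/

open Metric Set
open scoped ENNReal

theorem norm_integral_comp_sub_le {E F : Type*} [NormedAddCommGroup E] [MeasurableSpace E]
    [OpensMeasurableSpace E] [NormedAddCommGroup F] [NormedSpace ℝ F]
    (μ : Measure E) [IsFiniteMeasure μ] (ψ : ZeroAtInftyContinuousMap E F) {ε R : ℝ} (hε : 0 ≤ ε)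
    (hR : ∀ z, R < ‖z‖ → ‖ψ z‖ ≤ ε) (x : E) :
    ‖∫ y, ψ (x - y) ∂μ‖ ≤ ε * μ.real univ + ‖ψ‖ * μ.real (closedBall x R) := by
  have hball : MeasurableSet (closedBall x R) := isClosed_closedBall.measurableSet
  have hint : Integrable (fun y => ε + (closedBall x R).indicator (fun _ => ‖ψ‖) y) μ :=
    (integrable_const ε).add ((integrable_const _).indicator hball)
  have hbound : ∀ y, ‖ψ (x - y)‖ ≤ ε + (closedBall x R).indicator (fun _ => ‖ψ‖) y := by
    intro y
    by_cases hy : y ∈ closedBall x R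
    · rw [indicator_of_mem hy]
      have h := ψ.toBCF.norm_coe_le_norm (x - y)
      rw [ZeroAtInftyContinuousMap.norm_toBCF_eq_norm] at h
      exact le_add_of_nonneg_of_le hε h
    · rw [indicator_of_notMem hy, add_zero]
      apply hR
      rwa [mem_closedBall, not_le, dist_eq_norm, norm_sub_rev] at hy
  calc ‖∫ y, ψ (x - y) ∂μ‖
      ≤ ∫ y, (ε + (closedBall x R).indicator (fun _ => ‖ψ‖) y) ∂μ :=
        norm_integral_le_of_norm_le hint (.of_forall hbound)
    _ = ε * μ.real univ + ‖ψ‖ * μ.real (closedBall x R) := by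
        rw [integral_add (integrable_const ε) ((integrable_const _).indicator hball),
          integral_const, integral_indicator_const _ hball, smul_eq_mul, smul_eq_mul,
          mul_comm, mul_comm (μ.real _)]

def SpreadsOut {ι E : Type*} [PseudoMetricSpace E] [MeasurableSpace E] (μ : ι → Measure E)
    (l : Filter ι) : Prop :=
  ∀ R δ : ℝ, 0 < δ → ∀ᶠ i in l, ∀ x, (μ i).real (closedBall x R) ≤ δ

theorem tendsto_integral_integral_comp_sub_nhds_zero {ι E F : Type*} [NormedAddCommGroup E]
    [MeasurableSpace E] [OpensMeasurableSpace E] [NormedAddCommGroup F] [NormedSpace ℝ F]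
    {l : Filter ι} {μ : ι → Measure E} [∀ i, IsZeroOrProbabilityMeasure (μ i)]
    (hμ : SpreadsOut μ l) (ψ : ZeroAtInftyContinuousMap E F) :
    Tendsto (fun i => ∫ x, ∫ y, ψ (x - y) ∂μ i ∂μ i) l (𝓝 0) := by
  rw [Metric.tendsto_nhds]
  intro ε hε
  obtain ⟨R, hR⟩ := ZeroAtInftyContinuousMapClass.norm_le ψ (ε / 3) (by positivity)
  set δ := ε / (3 * (‖ψ‖ + 1))
  have hψδ : ‖ψ‖ * δ ≤ ε / 3 := by
    rw [mul_div_assoc', div_le_div_iff₀ (by positivity) (by norm_num)]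
    nlinarith [norm_nonneg ψ]
  filter_upwards [hμ R δ (by positivity)] with i hi
  have hinner : ∀ x, ‖∫ y, ψ (x - y) ∂μ i‖ ≤ ε / 3 + ε / 3 := fun x =>
    calc ‖∫ y, ψ (x - y) ∂μ i‖
        ≤ ε / 3 * (μ i).real univ + ‖ψ‖ * (μ i).real (closedBall x R) :=
          norm_integral_comp_sub_le (μ i) ψ (by positivity) (fun z hz => (hR z hz).le) x
      _ ≤ ε / 3 * 1 + ‖ψ‖ * δ := by gcongr; exacts [measureReal_le_one, hi x]
      _ ≤ ε / 3 + ε / 3 := by linarith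
  rw [dist_zero_right]
  calc ‖∫ x, ∫ y, ψ (x - y) ∂μ i ∂μ i‖ ≤ (ε / 3 + ε / 3) * (μ i).real univ :=
        norm_integral_le_of_norm_le_const (.of_forall hinner)
    _ ≤ (ε / 3 + ε / 3) * 1 := by gcongr; exact measureReal_le_one
    _ < ε := by linarith

def uniformCube (d n : ℕ) : Measure (Fin d → ℝ) :=
  ((n : ℝ≥0∞) ^ d)⁻¹ • volume.restrict (Icc 0 fun _ => (n : ℝ))

theorem uniformCube_apply_le (d n : ℕ) (s : Set (Fin d → ℝ)) :
    uniformCube d n s ≤ ((n : ℝ≥0∞) ^ d)⁻¹ * volume s := by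
  rw [uniformCube, Measure.smul_apply, smul_eq_mul]
  exact mul_le_mul_right (Measure.restrict_apply_le _ s) _

theorem uniformCube_univ (d n : ℕ) :
    uniformCube d n univ = ((n : ℝ≥0∞) ^ d)⁻¹ * (n : ℝ≥0∞) ^ d := by
  simp [uniformCube, Real.volume_Icc_pi]

theorem uniformCube_univ_of_ne_zero {d n : ℕ} (hn : n ≠ 0) : uniformCube d n univ = 1 := by
  rw [uniformCube_univ]
  exact ENNReal.inv_mul_cancel (pow_ne_zero _ (by exact_mod_cast hn)) (by simp)

instance isZeroOrProbabilityMeasure_uniformCube (d n : ℕ) :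
    IsZeroOrProbabilityMeasure (uniformCube d n) := by
  rcases eq_or_ne ((n : ℝ≥0∞) ^ d) 0 with h | h
  · exact ⟨Or.inl (by simp [uniformCube_univ, h])⟩
  · exact ⟨Or.inr ((uniformCube_univ d n).trans (ENNReal.inv_mul_cancel h (by simp)))⟩

theorem uniformCube_real_closedBall_le {d n : ℕ} (hn : n ≠ 0) (x : Fin d → ℝ) {R : ℝ}
    (hR : 0 ≤ R) : (uniformCube d n).real (closedBall x R) ≤ (2 * R) ^ d / (n : ℝ) ^ d := by
  have hfin : ((n : ℝ≥0∞) ^ d)⁻¹ * ENNReal.ofReal ((2 * R) ^ d) ≠ ⊤ :=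
    ENNReal.mul_ne_top (ENNReal.inv_ne_top.2 (pow_ne_zero _ (by exact_mod_cast hn)))
      ENNReal.ofReal_ne_top
  calc (uniformCube d n).real (closedBall x R)
      ≤ (((n : ℝ≥0∞) ^ d)⁻¹ * ENNReal.ofReal ((2 * R) ^ d)).toReal := by
        refine ENNReal.toReal_mono hfin ?_
        simpa [Real.volume_pi_closedBall x hR] using uniformCube_apply_le d n (closedBall x R)
    _ = (2 * R) ^ d / (n : ℝ) ^ d := by
        rw [ENNReal.toReal_mul, ENNReal.toReal_ofReal (by positivity)]
        simp [div_eq_inv_mul]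

theorem spreadsOut_uniformCube {d : ℕ} (hd : d ≠ 0) : SpreadsOut (uniformCube d) atTop := by
  intro R δ hδ
  set r := max R 0
  have hlim : Tendsto (fun n : ℕ => (2 * r) ^ d / (n : ℝ) ^ d) atTop (𝓝 0) :=
    tendsto_const_nhds.div_atTop ((tendsto_pow_atTop hd).comp tendsto_natCast_atTop_atTop)
  filter_upwards [hlim.eventually (ge_mem_nhds hδ), eventually_ne_atTop 0] with n hn hn0 x
  calc (uniformCube d n).real (closedBall x R) ≤ (uniformCube d n).real (closedBall x r) :=
        measureReal_mono (closedBall_subset_closedBall (le_max_left R 0))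
    _ ≤ (2 * r) ^ d / (n : ℝ) ^ d := uniformCube_real_closedBall_le hn0 x (le_max_right R 0)
    _ ≤ δ := hn

section FeatureMap

variable {𝕜 H X : Type*} [RCLike 𝕜] [NormedAddCommGroup H] [InnerProductSpace 𝕜 H]

theorem continuous_of_continuous_inner [TopologicalSpace X] {K : X → H}
    (hK : Continuous fun p : X × X => inner 𝕜 (K p.1) (K p.2)) : Continuous K := by
  rw [continuous_iff_continuousAt]
  intro x₀
  set g : X → ℝ := fun x => RCLike.re (inner 𝕜 (K x) (K x)) -
    2 * RCLike.re (inner 𝕜 (K x) (K x₀)) + RCLike.re (inner 𝕜 (K x₀) (K x₀))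
  have hg : Continuous g := by
    have h₁ := hK.comp (continuous_id.prodMk continuous_id)
    have h₂ := hK.comp (continuous_id.prodMk (continuous_const (y := x₀)))
    exact ((RCLike.continuous_re.comp h₁).sub
      (continuous_const.mul (RCLike.continuous_re.comp h₂))).add continuous_const
  have hnorm : ∀ x, ‖K x - K x₀‖ = √(g x) := fun x => by
    rw [← Real.sqrt_sq (norm_nonneg (K x - K x₀)), @norm_sub_sq 𝕜, ← @inner_self_eq_norm_sq 𝕜,
      ← @inner_self_eq_norm_sq 𝕜]
  have hg₀ : √(g x₀) = 0 := by rw [← hnorm, sub_self, norm_zero]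
  rw [ContinuousAt, tendsto_iff_norm_sub_tendsto_zero]
  simp only [hnorm]
  exact (Real.continuous_sqrt.comp hg).tendsto' x₀ 0 hg₀

theorem integral_integral_inner_eq_norm_sq [CompleteSpace H] [NormedSpace ℝ H]
    [MeasurableSpace X] {μ : Measure X} {K : X → H} (hK : Integrable K μ) :
    ∫ x, ∫ y, inner 𝕜 (K x) (K y) ∂μ ∂μ = (‖∫ x, K x ∂μ‖ : 𝕜) ^ 2 := by
  set Φ := ∫ x, K x ∂μ with hΦ
  calc ∫ x, ∫ y, inner 𝕜 (K x) (K y) ∂μ ∂μ = ∫ x, inner 𝕜 (K x) Φ ∂μ := by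
        simp only [integral_inner hK, ← hΦ]
    _ = ∫ x, conj (inner 𝕜 Φ (K x)) ∂μ := by simp only [inner_conj_symm]
    _ = conj (inner 𝕜 Φ Φ) := by rw [integral_conj, integral_inner hK]
    _ = (‖Φ‖ : 𝕜) ^ 2 := by rw [inner_self_eq_norm_sq_to_K]; simp

theorem tendsto_norm_integral_nhds_zero [CompleteSpace H] [NormedSpace ℝ H] [MeasurableSpace X]
    {ι : Type*} {l : Filter ι} {μ : ι → Measure X} {K : X → H} (hK : ∀ i, Integrable K (μ i))
    (h : Tendsto (fun i => ∫ x, ∫ y, inner 𝕜 (K x) (K y) ∂μ i ∂μ i) l (𝓝 0)) :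
    Tendsto (fun i => ‖∫ x, K x ∂μ i‖) l (𝓝 0) := by
  have hnorm : ∀ i, ‖∫ x, K x ∂μ i‖ = √‖∫ x, ∫ y, inner 𝕜 (K x) (K y) ∂μ i ∂μ i‖ := fun i => by
    rw [integral_integral_inner_eq_norm_sq (hK i), norm_pow, RCLike.norm_ofReal, abs_norm,
      Real.sqrt_sq (norm_nonneg _)]
  simp only [hnorm]
  exact (Real.continuous_sqrt.tendsto' 0 0 Real.sqrt_zero).comp
    (tendsto_zero_iff_norm_tendsto_zero.1 h)

end FeatureMap

theorem induced_ne_narrowTopology {ι X H : Type*} [TopologicalSpace X] [MeasurableSpace X]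
    [TopologicalSpace H] {M : Set (Measure X)} {l : Filter ι} (Φ : M → H) (u : ι → M) (μ : M)
    (hΦ : Tendsto (Φ ∘ u) l (𝓝 (Φ μ)))
    (hu : ¬ ∀ f : BoundedContinuousFunction X ℝ,
      Tendsto (fun i => ∫ x, f x ∂(u i : Measure X)) l (𝓝 (∫ x, f x ∂(μ : Measure X)))) :
    TopologicalSpace.induced Φ inferInstance ≠ narrowTopology X M := by
  intro h
  have hlim : Tendsto u l (@nhds M (TopologicalSpace.induced Φ inferInstance) μ) := by
    rwa [nhds_induced, tendsto_comap_iff]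
  rw [h, narrowTopology, nhds_induced, tendsto_comap_iff, tendsto_pi_nhds] at hlim
  exact hu hlim

theorem not_forall_tendsto_integral_zero {ι X : Type*} [TopologicalSpace X] [MeasurableSpace X]
    {l : Filter ι} [l.NeBot] {μ : ι → Measure X} (hμ : ∀ᶠ i in l, μ i univ = 1) :
    ¬ ∀ f : BoundedContinuousFunction X ℝ,
      Tendsto (fun i => ∫ x, f x ∂μ i) l (𝓝 (∫ x, f x ∂(0 : Measure X))) := by
  intro h
  have hmass : ∀ᶠ i in l, ∫ _x, (1 : ℝ) ∂μ i = 1 := by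
    filter_upwards [hμ] with i hi
    simp [Measure.real, hi]
  have h1 := (h (BoundedContinuousFunction.const X 1)).congr' hmass
  simp only [BoundedContinuousFunction.const_apply, integral_zero_measure] at h1
  exact one_ne_zero (tendsto_nhds_unique tendsto_const_nhds h1)

theorem statement_19_general
    {d : ℕ} (hd : 1 ≤ d)
    (ψ : (Fin d → ℝ) → ℂ) (hψc : Continuous ψ)
    (hψ0 : Tendsto ψ (cocompact (Fin d → ℝ)) (nhds 0))
    (k : (Fin d → ℝ) → (Fin d → ℝ) → ℂ) (hkdef : ∀ x y, k x y = ψ (x - y))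
    (H : Type*) [NormedAddCommGroup H] [InnerProductSpace ℂ H] [CompleteSpace H]
    (ev : H →ₗ[ℂ] ((Fin d → ℝ) → ℂ))
    (K : (Fin d → ℝ) → H) (hK : ∀ x, ev (K x) = fun s => k s x)
    (hrep : ∀ (f : H) (x : Fin d → ℝ), (inner ℂ (K x) f : ℂ) = ev f x)
    -- `P n` is the uniform probability measure on the cube `[0,n]^d`
    (P : ℕ → Measure (Fin d → ℝ))
    (hP : ∀ n : ℕ, P n = ((n : ENNReal) ^ d)⁻¹ •
      (volume : Measure (Fin d → ℝ)).restrict (Set.Icc 0 fun _ => (n : ℝ))) :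
    -- `∬ k(x,y) dP_n(y) dP_n(x) → 0` …
    Tendsto (fun n => ∫ x, ∫ y, k x y ∂(P n) ∂(P n)) atTop (nhds 0) ∧
    -- … equivalently `‖Φ_k(P_n)‖ → 0` …
    Tendsto (fun n => ‖∫ x, K x ∂(P n)‖) atTop (nhds 0) ∧
    -- … while `P_n` has full mass `1` and does not converge narrowly to the zero measure
    (∀ n : ℕ, 1 ≤ n → P n Set.univ = 1) ∧
    ¬ (∀ f : BoundedContinuousFunction (Fin d → ℝ) ℝ,
        Tendsto (fun n => ∫ x, f x ∂(P n)) atTop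
          (nhds (∫ x, f x ∂(0 : Measure (Fin d → ℝ))))) ∧
    -- hence `k` metrises the narrow topology on no set `M ⊇ P ∪ {0}` of finite measures
    (∀ M : Set (Measure (Fin d → ℝ)),
      (∀ μ ∈ M, IsFiniteMeasure μ) →
      {μ : Measure (Fin d → ℝ) | IsProbabilityMeasure μ} ⊆ M →
      (0 : Measure (Fin d → ℝ)) ∈ M →
      TopologicalSpace.induced (fun μ : M => ∫ x, K x ∂(μ : Measure (Fin d → ℝ)))
          (inferInstance : TopologicalSpace H)
        ≠ narrowTopology (Fin d → ℝ) M) := by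
  obtain rfl : P = uniformCube d := funext hP
  have hkK : ∀ x y, inner ℂ (K x) (K y) = k x y := fun x y => by rw [hrep, hK]
  have hk_lim :
      Tendsto (fun n => ∫ x, ∫ y, k x y ∂uniformCube d n ∂uniformCube d n) atTop (𝓝 0) := by
    simp only [hkdef]
    exact tendsto_integral_integral_comp_sub_nhds_zero (spreadsOut_uniformCube (by omega))
      ⟨⟨ψ, hψc⟩, hψ0⟩
  have hK_cont : Continuous K := continuous_of_continuous_inner (𝕜 := ℂ) (by
    simp only [hkK, hkdef]
    exact hψc.comp (continuous_fst.sub continuous_snd))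
  have hK_norm : ∀ x, ‖K x‖ = ‖K 0‖ := fun x => by
    rw [← sq_eq_sq₀ (norm_nonneg _) (norm_nonneg _), ← @inner_self_eq_norm_sq ℂ,
      ← @inner_self_eq_norm_sq ℂ, hkK, hkK, hkdef, hkdef, sub_self, sub_self]
  have hK_int : ∀ n, Integrable K (uniformCube d n) := fun n =>
    Integrable.of_bound hK_cont.aestronglyMeasurable ‖K 0‖ (.of_forall fun x => (hK_norm x).le)
  have hnarrow := not_forall_tendsto_integral_zero (μ := uniformCube d)
    ((eventually_ne_atTop 0).mono fun n hn => uniformCube_univ_of_ne_zero hn)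
  have hΦ_lim : Tendsto (fun n => ‖∫ x, K x ∂uniformCube d n‖) atTop (𝓝 0) :=
    tendsto_norm_integral_nhds_zero (𝕜 := ℂ) hK_int (by simpa only [hkK] using hk_lim)
  refine ⟨hk_lim, hΦ_lim, fun n hn => uniformCube_univ_of_ne_zero (by omega), hnarrow, ?_⟩
  intro M _ hprob h0
  have hmem : ∀ n, uniformCube d n ∈ M := fun n => by
    rcases IsZeroOrProbabilityMeasure.measure_univ (μ := uniformCube d n) with h | h
    · rwa [Measure.measure_univ_eq_zero.1 h]
    · exact hprob ⟨h⟩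
  refine induced_ne_narrowTopology _ (fun n => ⟨_, hmem n⟩) ⟨0, h0⟩ ?_ hnarrow
  show Tendsto (fun n => ∫ x, K x ∂uniformCube d n) atTop (𝓝 (∫ x, K x ∂(0 : Measure _)))
  rw [integral_zero_measure, tendsto_zero_iff_norm_tendsto_zero]
  exact hΦ_lim

/-- for a stationary kernel `k(x,y) = ψ(x−y)` on `ℝ^d` with `ψ`
continuous and vanishing at infinity, the uniform probability measures `P_n` on the cubes
`[0,n]^d` satisfy `∬ k dP_n dP_n → 0` (equivalently `‖Φ_k(P_n)‖ → 0`) while `P_n` does not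
converge narrowly to the zero measure; hence `k` does not metrise the narrow topology on any
set of finite positive Borel measures containing all probability measures and `0`. -/
theorem statement_19
    {d : ℕ} (hd : 1 ≤ d)
    (ψ : (Fin d → ℝ) → ℂ) (hψc : Continuous ψ)
    (hψ0 : Tendsto ψ (cocompact (Fin d → ℝ)) (nhds 0))
    (k : (Fin d → ℝ) → (Fin d → ℝ) → ℂ) (hkdef : ∀ x y, k x y = ψ (x - y))
    (hk : IsPosDefKernel k)
    (H : Type*) [NormedAddCommGroup H] [InnerProductSpace ℂ H] [CompleteSpace H]
    (ev : H →ₗ[ℂ] ((Fin d → ℝ) → ℂ)) (hev : Function.Injective ev)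
    (K : (Fin d → ℝ) → H) (hK : ∀ x, ev (K x) = fun s => k s x)
    (hrep : ∀ (f : H) (x : Fin d → ℝ), (inner ℂ (K x) f : ℂ) = ev f x)
    -- `P n` is the uniform probability measure on the cube `[0,n]^d`
    (P : ℕ → Measure (Fin d → ℝ))
    (hP : ∀ n : ℕ, P n = ((n : ENNReal) ^ d)⁻¹ •
      (volume : Measure (Fin d → ℝ)).restrict (Set.Icc 0 fun _ => (n : ℝ))) :
    -- `∬ k(x,y) dP_n(y) dP_n(x) → 0` …
    Tendsto (fun n => ∫ x, ∫ y, k x y ∂(P n) ∂(P n)) atTop (nhds 0) ∧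
    -- … equivalently `‖Φ_k(P_n)‖ → 0` …
    Tendsto (fun n => ‖∫ x, K x ∂(P n)‖) atTop (nhds 0) ∧
    -- … while `P_n` has full mass `1` and does not converge narrowly to the zero measure
    (∀ n : ℕ, 1 ≤ n → P n Set.univ = 1) ∧
    ¬ (∀ f : BoundedContinuousFunction (Fin d → ℝ) ℝ,
        Tendsto (fun n => ∫ x, f x ∂(P n)) atTop
          (nhds (∫ x, f x ∂(0 : Measure (Fin d → ℝ))))) ∧
    -- hence `k` metrises the narrow topology on no set `M ⊇ P ∪ {0}` of finite measures
    (∀ M : Set (Measure (Fin d → ℝ)),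
      (∀ μ ∈ M, IsFiniteMeasure μ) →
      {μ : Measure (Fin d → ℝ) | IsProbabilityMeasure μ} ⊆ M →
      (0 : Measure (Fin d → ℝ)) ∈ M →
      TopologicalSpace.induced (fun μ : M => ∫ x, K x ∂(μ : Measure (Fin d → ℝ)))
          (inferInstance : TopologicalSpace H)
        ≠ narrowTopology (Fin d → ℝ) M) :=
  statement_19_general hd ψ hψc hψ0 k hkdef H ev K hK hrep P hP
end
end
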